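/- For i = 1, …, K let {v^{(i)}_j}_{j=1}^d be an orthonormal basis of ℂ^d, and let p_1, …, p_K ≥ 0 with ∑_i p_i = 1. Let a_1, …, a_K be an orthonormal basis of ℂ^K and set a₀ = ∑_i √p_i · a_i. Then the family {√p_i · v^{(i)}_j}_{(i,j)} (with K·d outcomes) is a rank-1 POVM on ℂ^d, and the family {v^{(i)}_j ⊗ a_i}_{(i,j)} is an orthonormal basis of ℂ^d ⊗ ℂ^K that is a Naimark extension of this POVM with basic ancilla state a₀, all of whose members are product vectors. In particular, any probabilistic mixture of von Neumann measurements admits a Naimark extension consisting entirely of product vectors (zero entanglement cost). -/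

import Mathlib

open scoped InnerProductSpace

/-- The rank-one operator `|k⟩⟨k| : x ↦ ⟨k, x⟩ • k` on `ℂ^d`. -/
noncomputable def rankOne {d : ℕ} (k : EuclideanSpace ℂ (Fin d)) :
    EuclideanSpace ℂ (Fin d) →ₗ[ℂ] EuclideanSpace ℂ (Fin d) where
  toFun x := ⟪k, x⟫_ℂ • k
  map_add' x y := by simp [inner_add_right, add_smul]
  map_smul' c x := by simp [inner_smul_right, smul_smul]

/-- The product vector `ψ ⊗ a` in `ℂ^d ⊗ ℂ^K`, modeled as `ℂ^{d·K}`. -/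
def tp {d K : ℕ} (ψ : EuclideanSpace ℂ (Fin d)) (a : EuclideanSpace ℂ (Fin K)) :
    EuclideanSpace ℂ (Fin d × Fin K) :=
  WithLp.toLp 2 (fun p : Fin d × Fin K => ψ p.1 * a p.2)


lemma inner_tp {d K : ℕ} (x u : EuclideanSpace ℂ (Fin d)) (y w : EuclideanSpace ℂ (Fin K)) :
    ⟪tp x y, tp u w⟫_ℂ = ⟪x, u⟫_ℂ * ⟪y, w⟫_ℂ := by
  simp only [tp, PiLp.inner_apply, PiLp.toLp_apply, RCLike.inner_apply, map_mul]
  rw [Fintype.sum_prod_type, Finset.sum_mul_sum]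
  refine Finset.sum_congr rfl fun i _ => Finset.sum_congr rfl fun j _ => by ring

lemma sum_inner_smul {d : ℕ} (b : Fin d → EuclideanSpace ℂ (Fin d))
    (hb : Orthonormal ℂ b) (x : EuclideanSpace ℂ (Fin d)) :
    ∑ j, ⟪b j, x⟫_ℂ • b j = x := by
  have hspan : Submodule.span ℂ (Set.range b) = ⊤ := by
    apply Submodule.eq_top_of_finrank_eq
    rw [finrank_span_eq_card hb.linearIndependent]
    simp
  let B : OrthonormalBasis (Fin d) ℂ (EuclideanSpace ℂ (Fin d)) :=
    OrthonormalBasis.mk hb hspan.ge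
  have := B.sum_repr' x
  simpa [B, OrthonormalBasis.coe_mk] using this

lemma rankOne_apply {d : ℕ} (k x : EuclideanSpace ℂ (Fin d)) :
    rankOne k x = ⟪k, x⟫_ℂ • k := rfl

/-- For orthonormal bases `{v^{(i)}_j}_j` of `ℂ^d` (`i = 1, …, K`),
a probability distribution `p` on `{1, …, K}`, an orthonormal basis `a_1, …, a_K` of
`ℂ^K` and `a₀ = ∑ᵢ √pᵢ aᵢ`: the family `{√pᵢ v^{(i)}_j}_{(i,j)}` is a rank-1 POVM on
`ℂ^d`, and `{v^{(i)}_j ⊗ aᵢ}_{(i,j)}` is an orthonormal basis of `ℂ^d ⊗ ℂ^K` forming a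
Naimark extension of it with basic ancilla state `a₀`, all of whose members are product
vectors.  (Mixtures of von Neumann measurements have zero entanglement cost.) -/
theorem mixture_of_von_neumann_zero_cost {d K : ℕ}
    (v : Fin K → Fin d → EuclideanSpace ℂ (Fin d))
    (hv : ∀ i, Orthonormal ℂ (v i))
    (p : Fin K → ℝ) (hp : ∀ i, 0 ≤ p i) (hps : ∑ i, p i = 1)
    (a : Fin K → EuclideanSpace ℂ (Fin K)) (ha : Orthonormal ℂ a)
    (a₀ : EuclideanSpace ℂ (Fin K)) (ha₀ : a₀ = ∑ i, (Real.sqrt (p i) : ℂ) • a i) :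
    (∑ q : Fin K × Fin d, rankOne ((Real.sqrt (p q.1) : ℂ) • v q.1 q.2)
        = LinearMap.id) ∧
    Orthonormal ℂ (fun q : Fin K × Fin d => tp (v q.1 q.2) (a q.1)) ∧
    (∀ (q : Fin K × Fin d) (ψ : EuclideanSpace ℂ (Fin d)),
      ‖⟪tp ψ a₀, tp (v q.1 q.2) (a q.1)⟫_ℂ‖ ^ 2
        = ‖⟪ψ, (Real.sqrt (p q.1) : ℂ) • v q.1 q.2⟫_ℂ‖ ^ 2) ∧
    (∀ q : Fin K × Fin d, ∃ (x : EuclideanSpace ℂ (Fin d)) (y : EuclideanSpace ℂ (Fin K)),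
      tp (v q.1 q.2) (a q.1) = tp x y) := by
  refine ⟨?_, ?_, ?_, fun q => ⟨_, _, rfl⟩⟩
  · apply LinearMap.ext
    intro x
    simp only [LinearMap.sum_apply, rankOne_apply, LinearMap.id_apply]
    rw [Fintype.sum_prod_type]
    have h1 : ∀ i : Fin K,
        ∑ j, (⟪(Real.sqrt (p i) : ℂ) • v i j, x⟫_ℂ) • ((Real.sqrt (p i) : ℂ) • v i j)
          = (p i : ℂ) • x := by
      intro i
      have hc : (starRingEnd ℂ) ((Real.sqrt (p i) : ℂ)) * (Real.sqrt (p i) : ℂ) = (p i : ℂ) := by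
        rw [Complex.conj_ofReal, ← Complex.ofReal_mul, Real.mul_self_sqrt (hp i)]
      calc ∑ j, (⟪(Real.sqrt (p i) : ℂ) • v i j, x⟫_ℂ) • ((Real.sqrt (p i) : ℂ) • v i j)
          = (p i : ℂ) • ∑ j, ⟪v i j, x⟫_ℂ • v i j := by
            rw [Finset.smul_sum]
            refine Finset.sum_congr rfl fun j _ => ?_
            rw [inner_smul_left, smul_smul, smul_smul]
            congr 1
            rw [← hc]; ring
        _ = (p i : ℂ) • x := by rw [sum_inner_smul (v i) (hv i) x]
    rw [Finset.sum_congr rfl fun i _ => h1 i, ← Finset.sum_smul]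
    have : (∑ i, (p i : ℂ)) = 1 := by
      rw [← Complex.ofReal_sum, hps, Complex.ofReal_one]
    rw [this, one_smul]
  · rw [orthonormal_iff_ite]
    intro q r
    rw [inner_tp]
    have ha' := orthonormal_iff_ite.mp ha q.1 r.1
    by_cases h : q.1 = r.1
    · obtain ⟨i, j⟩ := q; obtain ⟨i', j'⟩ := r
      simp only at h
      subst h
      rw [ha']
      simp [orthonormal_iff_ite.mp (hv i) j j', Prod.ext_iff]
    · rw [ha']
      simp [h, Prod.ext_iff]
  · intro q ψ
    rw [inner_tp, inner_smul_right]
    have h0 : ⟪a₀, a q.1⟫_ℂ = (Real.sqrt (p q.1) : ℂ) := by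
      rw [ha₀, sum_inner]
      simp only [inner_smul_left, orthonormal_iff_ite.mp ha, Complex.conj_ofReal,
        mul_ite, mul_one, mul_zero, Finset.sum_ite_eq', Finset.mem_univ, if_true]
    rw [h0, norm_mul, norm_mul]
    ring
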